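/- For a positively folded alcove walk p, the signed length of p equals the signed length of its end alcove: ε(p) = ε^+(p) − ε^−(p) = ε(end(p)). In particular, if p ends in t_μ φ(p) with φ(p) ∈ W_0, then ε(p) = ⟨μ, 2ρ⟩ − ℓ(φ(p)). -/

import Mathlib

open scoped RealInnerProductSpace BigOperators

attribute [local instance] Classical.propDecidable

noncomputable section

variable {V : Type*} [NormedAddCommGroup V] [InnerProductSpace ℝ V]

/-- The coroot `α^∨ = 2α/⟨α,α⟩` of a root `α`. -/
def coroot' (α : V) : V := (2 / ⟪α, α⟫) • α

/-- The reflection `s_α` in the linear hyperplane orthogonal to `α`. -/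
def sref (α : V) : V → V := fun x => x - ⟪x, α⟫ • coroot' α

/-- Data of a reduced irreducible crystallographic root system `R` (recorded via its
positive system `Rpos` and simple roots `simple`) in a real inner product space. -/
structure RSData (V : Type*) [NormedAddCommGroup V] [InnerProductSpace ℝ V] (n : ℕ) where
  Rpos : Finset V
  simple : Fin n → V
  hsimple : ∀ i, simple i ∈ Rpos
  hnz : ∀ α ∈ Rpos, α ≠ 0
  hdisj : ∀ α ∈ Rpos, -α ∉ Rpos
  hind : LinearIndependent ℝ simple
  hspan : Submodule.span ℝ (Set.range simple) = ⊤
  hposcomb : ∀ β ∈ Rpos, ∃ c : Fin n → ℕ, β = ∑ i, (c i : ℝ) • simple i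
  hrefl : ∀ α ∈ Rpos, ∀ β ∈ Rpos, sref α β ∈ Rpos ∨ -(sref α β) ∈ Rpos
  hcrys : ∀ α ∈ Rpos, ∀ β ∈ Rpos, ∃ z : ℤ, ⟪β, coroot' α⟫ = (z : ℝ)
  hred : ∀ α ∈ Rpos, ∀ c : ℝ, c • α ∈ Rpos → c = 1
  hirr : ∀ S : Set V, (∀ α ∈ Rpos, ∀ β ∈ Rpos, α ∈ S → ⟪α, β⟫ ≠ 0 → β ∈ S) →
      (∃ α ∈ Rpos, α ∈ S) → ∀ β ∈ Rpos, β ∈ S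

/-- The finite Weyl group `W₀`, realized as the set of all compositions of the
reflections `s_α`, `α ∈ R`. -/
def W0Set (Rpos : Finset V) : Set (V → V) :=
  {w | ∃ l : List V, (∀ a ∈ l, a ∈ Rpos) ∧ w = l.foldr (fun a f => sref a ∘ f) id}

/-- Pairs `(α, k)` (with `α ∈ R⁺`) indexing affine hyperplanes
`H_{α+kδ} = {v | ⟪v,α⟫ + k = 0}` that are crossed positively when moving from `x` to `y`
(i.e. `x` lies on the negative side and `y` on the positive side). -/
def sepPos (Rpos : Finset V) (x y : V) : Set (V × ℤ) :=
  {q | q.1 ∈ Rpos ∧ ⟪x, q.1⟫ + (q.2 : ℝ) < 0 ∧ 0 < ⟪y, q.1⟫ + (q.2 : ℝ)}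

/-- The signed number of affine hyperplanes separating `x` from `y`:
positively crossed ones minus negatively crossed ones. -/
def signedLen (Rpos : Finset V) (x y : V) : ℤ :=
  (Nat.card (sepPos Rpos x y) : ℤ) - (Nat.card (sepPos Rpos y x) : ℤ)

/-- The total number of affine hyperplanes separating `x` from `y`. -/
def totalLen (Rpos : Finset V) (x y : V) : ℕ :=
  Nat.card (sepPos Rpos x y) + Nat.card (sepPos Rpos y x)

/-- Labels for the generators `s_0, s_1, …, s_n` of the affine Weyl group:
`none` is the affine generator `s_0`, `some i` is the finite generator `s_i`. -/
def Gen (n : ℕ) := Option (Fin n)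

/-- The affine reflection in the hyperplane `H_{α+kδ} = {x | ⟪x,α⟫ + k = 0}`. -/
def aref (α : V) (k : ℝ) : V → V := fun x => x - (⟪x, α⟫ + k) • coroot' α

/-- The root attached to a generator: `θ` (the highest root) for `s_0`,
and `α_i` for `s_i`. -/
def genRoot {n : ℕ} (D : RSData V n) (θ : V) : Gen n → V
  | none => θ
  | some j => D.simple j

/-- The integer `k` with `s_i` the reflection in `H_{genRoot i + kδ}`:
`k = -1` for `s_0` and `k = 0` otherwise. -/
def genK {n : ℕ} : Gen n → ℤ
  | none => -1
  | some _ => 0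

/-- The simple affine reflections `s_0, …, s_n`. -/
def sgen {n : ℕ} (D : RSData V n) (θ : V) (i : Gen n) : V → V :=
  aref (genRoot D θ i) ((genK i : ℤ) : ℝ)

/-- An alcove walk is encoded by its list of steps: each step records the generator
label (its type) and a Boolean, `true` for a crossing and `false` for a fold.
`walkMap` is the element of the (extended) affine Weyl group, realized as an affine
transformation of `V`, representing the alcove reached at the end of the walk
started at the fundamental alcove `1`. -/
def walkMap {n : ℕ} (D : RSData V n) (θ : V) (steps : List (Gen n × Bool)) : V → V :=
  steps.foldl (fun g s => if s.2 = true then g ∘ sgen D θ s.1 else g) id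

/-- The generator label of the `j`-th step. -/
def stepGen {n : ℕ} (steps : List (Gen n × Bool)) (j : ℕ) : Gen n :=
  (steps.getD j (none, true)).1

/-- Whether the `j`-th step is a crossing (rather than a fold). -/
def crossAt {n : ℕ} (steps : List (Gen n × Bool)) (j : ℕ) : Prop :=
  (steps.getD j (none, true)).2 = true

/-- The direction vector of the wall met at the `j`-th step of the walk. -/
def wallDir {n : ℕ} (D : RSData V n) (θ : V) (steps : List (Gen n × Bool)) (j : ℕ) : V :=
  walkMap D θ (steps.take j) (genRoot D θ (stepGen steps j))
    - walkMap D θ (steps.take j) 0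

/-- The positive root `β` such that the wall met at the `j`-th step is `H_{β+mδ}`. -/
def wallRoot {n : ℕ} (D : RSData V n) (θ : V) (steps : List (Gen n × Bool)) (j : ℕ) : V :=
  if wallDir D θ steps j ∈ D.Rpos then wallDir D θ steps j else -wallDir D θ steps j

/-- The constant `m` such that the wall met at the `j`-th step is
`H_{β+mδ} = {x | ⟪x,β⟫ + m = 0}` with `β = wallRoot` positive. -/
def wallConst {n : ℕ} (D : RSData V n) (θ : V) (steps : List (Gen n × Bool)) (j : ℕ) : ℝ :=
  if wallDir D θ steps j ∈ D.Rpos then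
    ((genK (stepGen steps j) : ℤ) : ℝ) - ⟪walkMap D θ (steps.take j) 0, wallDir D θ steps j⟫
  else
    ⟪walkMap D θ (steps.take j) 0, wallDir D θ steps j⟫ - ((genK (stepGen steps j) : ℤ) : ℝ)

/-- The position of the alcove occupied before the `j`-th step relative to the wall met
at the `j`-th step: negative means the alcove is on the negative side. -/
def sideAt {n : ℕ} (D : RSData V n) (θ p₀ : V) (steps : List (Gen n × Bool)) (j : ℕ) : ℝ :=
  ⟪walkMap D θ (steps.take j) p₀, wallRoot D θ steps j⟫ + wallConst D θ steps j

/-- `ε⁺(p)`: the number of positive crossings. -/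
def numPosCross {n : ℕ} (D : RSData V n) (θ p₀ : V) (steps : List (Gen n × Bool)) : ℕ :=
  ((Finset.range steps.length).filter fun j =>
    crossAt steps j ∧ sideAt D θ p₀ steps j < 0).card

/-- `ε⁻(p)`: the number of negative crossings. -/
def numNegCross {n : ℕ} (D : RSData V n) (θ p₀ : V) (steps : List (Gen n × Bool)) : ℕ :=
  ((Finset.range steps.length).filter fun j =>
    crossAt steps j ∧ 0 < sideAt D θ p₀ steps j).card

/-- `f(p)`: the number of folds. -/
def numFolds {n : ℕ} (steps : List (Gen n × Bool)) : ℕ :=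
  ((Finset.range steps.length).filter fun j => ¬ crossAt steps j).card

/-- A walk is positively folded when every fold leaves the walk on the positive side of
the wall on which it folds. -/
def PosFolded {n : ℕ} (D : RSData V n) (θ p₀ : V) (steps : List (Gen n × Bool)) : Prop :=
  ∀ j < steps.length, ¬ crossAt steps j → 0 < sideAt D θ p₀ steps j

/-- `dim(p) = ε⁺(p) + f(p)`. -/
def walkDim {n : ℕ} (D : RSData V n) (θ p₀ : V) (steps : List (Gen n × Bool)) : ℕ :=
  numPosCross D θ p₀ steps + numFolds steps

/-- `ρ`, the half sum of the positive roots. -/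
def halfSum {n : ℕ} (D : RSData V n) : V := (1 / 2 : ℝ) • ∑ α ∈ D.Rpos, α

/-- The length `ℓ(w)` of an element of the finite Weyl group `W₀`, computed as the number
of (automatically linear) hyperplanes separating the fundamental alcove from its image. -/
def finLen {n : ℕ} (D : RSData V n) (p₀ : V) (w : V → V) : ℕ :=
  Nat.card {α : V | α ∈ D.Rpos ∧ ⟪w p₀, α⟫ < 0}

/-!
For points `x`, `y` off all walls, `signedLen x y = F x - F y` for the potential
`F x = ∑_{α > 0} ⌊-⟪x, α⟫⌋` (`wallPotential`): for each `α`, the walls `H_{α+kδ}` separating `x`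
from `y` are those with `k` between `⌊-⟪y, α⟫⌋` and `⌊-⟪x, α⟫⌋`. So it suffices that each
crossing changes `F` by minus the sign of the side of its wall where it starts; folds change
nothing. Before and after a crossing of type `i` the walk is at `w p₀` and `w (s_i p₀)`, where
`w x = w₀ x + t` with `w₀ ∈ W₀` and `t` a coweight. Translating by `t` shifts `F` by a constant,
and `⟪w₀ x, α⟫ = ⟪x, w₀⁻¹ α⟫`, so the change of `F` is a sum over the roots `w₀⁻¹ α`. Only the
terms `w₀⁻¹ α = ±α_i` (with `α_0 = θ`) survive, since `p₀` and `s_i p₀` lie in the same unit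
interval for every other root (for `s₀` because `⟪α, θ^∨⟫ ∈ {0, 1}` when `α ≠ θ`). Finally
`F p₀ = -|R⁺|` and `F (v p₀ + μ) = ℓ(v) - |R⁺| - ⟪μ, 2ρ⟫`.
-/

lemma inner_coroot'_self {a : V} (ha : a ≠ 0) : ⟪coroot' a, a⟫ = 2 := by
  have : ⟪a, a⟫ ≠ 0 := (real_inner_self_pos.2 ha).ne'
  rw [coroot', real_inner_smul_left]
  field_simp

lemma inner_sref_left (a x y : V) : ⟪sref a x, y⟫ = ⟪x, sref a y⟫ := by
  simp only [sref, coroot', inner_sub_left, inner_sub_right, real_inner_smul_left,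
    real_inner_smul_right, real_inner_comm a y]
  ring

lemma inner_sref_self {a : V} (ha : a ≠ 0) (x : V) : ⟪sref a x, a⟫ = -⟪x, a⟫ := by
  rw [sref, inner_sub_left, real_inner_smul_left, inner_coroot'_self ha]
  ring

lemma sref_sref {a : V} (ha : a ≠ 0) (x : V) : sref a (sref a x) = x := by
  rw [sref, inner_sref_self ha, sref]
  module

lemma sref_sub (a x y : V) : sref a (x - y) = sref a x - sref a y := by
  simp only [sref, inner_sub_left]
  module

lemma sref_smul (a : V) (c : ℝ) (x : V) : sref a (c • x) = c • sref a x := by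
  simp only [sref, real_inner_smul_left]
  module

lemma sref_neg (a x : V) : sref a (-x) = -sref a x := by
  simp only [sref, inner_neg_left]
  module

lemma aref_eq_sref_sub (α : V) (k : ℝ) (x : V) : aref α k x = sref α x - k • coroot' α := by
  simp only [aref, sref]
  module

lemma inner_aref (α : V) (k : ℝ) (x y : V) :
    ⟪aref α k x, y⟫ = ⟪x, y⟫ - (⟪x, α⟫ + k) * ⟪coroot' α, y⟫ := by
  rw [aref, inner_sub_left, real_inner_smul_left]

lemma inner_aref_self {α : V} (hα : α ≠ 0) (k : ℝ) (x : V) :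
    ⟪aref α k x, α⟫ = -⟪x, α⟫ - 2 * k := by
  rw [inner_aref, inner_coroot'_self hα]
  ring

/-- `W0Set D.Rpos` consists of the maps `reflComp l` with `l` a list of positive roots. -/
def reflComp (l : List V) : V → V := l.foldr (fun a f => sref a ∘ f) id

lemma reflComp_cons (a : V) (l : List V) (x : V) :
    reflComp (a :: l) x = sref a (reflComp l x) := rfl

lemma reflComp_append (l₁ l₂ : List V) (x : V) :
    reflComp (l₁ ++ l₂) x = reflComp l₁ (reflComp l₂ x) := by
  induction l₁ with
  | nil => rfl
  | cons a l ih => rw [List.cons_append, reflComp_cons, ih, reflComp_cons]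

lemma reflComp_sub (l : List V) (x y : V) :
    reflComp l (x - y) = reflComp l x - reflComp l y := by
  induction l with
  | nil => rfl
  | cons a l ih => simp only [reflComp_cons, ih, sref_sub]

lemma reflComp_smul (l : List V) (c : ℝ) (x : V) : reflComp l (c • x) = c • reflComp l x := by
  induction l with
  | nil => rfl
  | cons a l ih => simp only [reflComp_cons, ih, sref_smul]

lemma reflComp_zero (l : List V) : reflComp l 0 = 0 := by
  simpa using reflComp_smul l 0 0

lemma reflComp_neg (l : List V) (x : V) : reflComp l (-x) = -reflComp l x := by
  simpa [reflComp_zero] using reflComp_sub l 0 x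

lemma inner_reflComp_left (l : List V) (x y : V) :
    ⟪reflComp l x, y⟫ = ⟪x, reflComp l.reverse y⟫ := by
  induction l generalizing y with
  | nil => rfl
  | cons a l ih => rw [reflComp_cons, inner_sref_left, ih, List.reverse_cons, reflComp_append]; rfl

lemma reflComp_reverse_reflComp {l : List V} (hl : ∀ a ∈ l, a ≠ 0) (x : V) :
    reflComp l.reverse (reflComp l x) = x := by
  induction l generalizing x with
  | nil => rfl
  | cons a l ih =>
    rw [List.reverse_cons, reflComp_append, reflComp_cons]
    change reflComp l.reverse (sref a (sref a (reflComp l x))) = x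
    rw [sref_sref (hl a List.mem_cons_self), ih fun b hb => hl b (List.mem_cons_of_mem a hb)]

lemma reflComp_reflComp_reverse {l : List V} (hl : ∀ a ∈ l, a ≠ 0) (x : V) :
    reflComp l (reflComp l.reverse x) = x := by
  simpa using reflComp_reverse_reflComp (l := l.reverse) (by simpa using hl) x

lemma inner_reflComp_reflComp {l : List V} (hl : ∀ a ∈ l, a ≠ 0) (x y : V) :
    ⟪reflComp l x, reflComp l y⟫ = ⟪x, y⟫ := by
  rw [inner_reflComp_left, reflComp_reverse_reflComp hl]

lemma floor_neg_eq_neg_one {a : ℝ} (ha : 0 < a ∧ a < 1) : ⌊-a⌋ = -1 := by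
  rw [Int.floor_eq_iff]
  constructor <;> push_cast <;> linarith

namespace RSData

variable {n : ℕ} (D : RSData V n)

def IsRoot (x : V) : Prop := x ∈ D.Rpos ∨ -x ∈ D.Rpos

def IsCoweight (t : V) : Prop := ∀ α ∈ D.Rpos, ∃ z : ℤ, ⟪t, α⟫ = z

def OffWalls (x : V) : Prop := ∀ α ∈ D.Rpos, ∀ z : ℤ, ⟪x, α⟫ ≠ z

def IsHighest (θ : V) : Prop :=
  ∀ β ∈ D.Rpos, ∃ c : Fin n → ℝ, (∀ i, 0 ≤ c i) ∧ θ - β = ∑ i, c i • D.simple i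

def InFundAlcove (p₀ : V) : Prop := ∀ α ∈ D.Rpos, 0 < ⟪p₀, α⟫ ∧ ⟪p₀, α⟫ < 1

def wallPotential (x : V) : ℤ := ∑ α ∈ D.Rpos, ⌊-⟪x, α⟫⌋

variable {D} {θ p₀ : V}

lemma isRoot_of_mem {x : V} (hx : x ∈ D.Rpos) : D.IsRoot x := Or.inl hx

lemma isRoot_sref {a x : V} (ha : a ∈ D.Rpos) (hx : D.IsRoot x) : D.IsRoot (sref a x) := by
  rcases hx with hx | hx
  · exact D.hrefl a ha x hx
  · simpa [sref_neg, IsRoot, or_comm] using D.hrefl a ha (-x) hx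

lemma isRoot_reflComp {l : List V} (hl : ∀ a ∈ l, a ∈ D.Rpos) {x : V} (hx : D.IsRoot x) :
    D.IsRoot (reflComp l x) := by
  induction l with
  | nil => exact hx
  | cons a l ih =>
    exact isRoot_sref (hl a List.mem_cons_self) (ih fun b hb => hl b (List.mem_cons_of_mem a hb))

lemma isCoweight_zero : D.IsCoweight 0 := fun _ _ => ⟨0, by simp⟩

lemma IsCoweight.sub {s t : V} (hs : D.IsCoweight s) (ht : D.IsCoweight t) :
    D.IsCoweight (s - t) := by
  intro α hα
  obtain ⟨a, ha⟩ := hs α hα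
  obtain ⟨b, hb⟩ := ht α hα
  exact ⟨a - b, by rw [inner_sub_left, ha, hb]; push_cast; ring⟩

lemma IsCoweight.intCast_smul {t : V} (ht : D.IsCoweight t) (k : ℤ) :
    D.IsCoweight ((k : ℝ) • t) := by
  intro α hα
  obtain ⟨a, ha⟩ := ht α hα
  exact ⟨k * a, by rw [real_inner_smul_left, ha]; push_cast; ring⟩

lemma isCoweight_reflComp_coroot {l : List V} (hl : ∀ a ∈ l, a ∈ D.Rpos) {β : V}
    (hβ : β ∈ D.Rpos) : D.IsCoweight (reflComp l (coroot' β)) := by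
  intro α hα
  rw [inner_reflComp_left, real_inner_comm]
  rcases isRoot_reflComp (fun b hb => hl b (List.mem_reverse.1 hb)) (isRoot_of_mem hα) with h | h
  · exact D.hcrys β hβ _ h
  · obtain ⟨z, hz⟩ := D.hcrys β hβ _ h
    exact ⟨-z, by rw [inner_neg_left] at hz; push_cast; linarith⟩

lemma offWalls_reflComp_add {x : V} (hx : ∀ γ, D.IsRoot γ → ∀ z : ℤ, ⟪x, γ⟫ ≠ z)
    {l : List V} (hl : ∀ a ∈ l, a ∈ D.Rpos) {t : V} (ht : D.IsCoweight t) :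
    D.OffWalls (reflComp l x + t) := by
  intro α hα z hz
  obtain ⟨a, ha⟩ := ht α hα
  refine hx _ (isRoot_reflComp (fun b hb => hl b (List.mem_reverse.1 hb)) (isRoot_of_mem hα))
    (z - a) ?_
  rw [inner_add_left, inner_reflComp_left, ha] at hz
  push_cast
  linarith

lemma sref_simple_mem (i : Fin n) {α : V} (hα : α ∈ D.Rpos) (hne : α ≠ D.simple i) :
    sref (D.simple i) α ∈ D.Rpos := by
  refine (D.hrefl _ (D.hsimple i) α hα).resolve_right fun hγ => hne ?_
  obtain ⟨a, ha⟩ := D.hposcomb α hα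
  obtain ⟨b, hb⟩ := D.hposcomb _ hγ
  -- `α + (-s_i α)` is a multiple of `α_i`, so comparing coefficients `α` is one too
  set c := ⟪α, D.simple i⟫ * (2 / ⟪D.simple i, D.simple i⟫)
  have hsum : ∑ j, ((a j + b j : ℕ) : ℝ) • D.simple j
      = ∑ j, (Pi.single i c : Fin n → ℝ) j • D.simple j := by
    simp only [Nat.cast_add, add_smul, Finset.sum_add_distrib, ← ha, ← hb, Pi.single_apply,
      ite_smul, zero_smul, Finset.sum_ite_eq', Finset.mem_univ, if_true, sref, coroot',
      smul_smul, c]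
    abel
  have hcoeff := Fintype.linearIndependent_iffₛ.1 D.hind _ _ hsum
  have hα_eq : α = (a i : ℝ) • D.simple i := by
    rw [ha, Finset.sum_eq_single i (fun j _ hj => ?_) (by simp)]
    have hab : a j + b j = 0 := by
      have := hcoeff j
      rw [Pi.single_apply, if_neg hj] at this
      exact_mod_cast this
    rw [show a j = 0 by omega, Nat.cast_zero, zero_smul]
  rw [hα_eq, D.hred _ (D.hsimple i) (a i) (hα_eq ▸ hα), one_smul]

lemma mem_sepPos_iff {x y : V} (hx : D.OffWalls x) (α : V) (k : ℤ) :
    (α, k) ∈ sepPos D.Rpos x y ↔ α ∈ D.Rpos ∧ k ∈ Finset.Ioc ⌊-⟪y, α⟫⌋ ⌊-⟪x, α⟫⌋ := by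
  simp only [sepPos, Set.mem_ofPred_eq, Finset.mem_Ioc, Int.floor_lt, Int.le_floor]
  refine and_congr_right fun hα => ⟨fun h => ⟨by linarith, by linarith⟩, fun h => ⟨?_, by linarith⟩⟩
  have : ⟪x, α⟫ ≠ ((-k : ℤ) : ℝ) := hx α hα (-k)
  push_cast at this
  exact lt_of_le_of_ne (by linarith) fun h' => this (by linarith)

lemma card_sepPos {x : V} (hx : D.OffWalls x) (y : V) :
    Nat.card (sepPos D.Rpos x y) = ∑ α ∈ D.Rpos, (⌊-⟪x, α⟫⌋ - ⌊-⟪y, α⟫⌋).toNat := by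
  have hsep : sepPos D.Rpos x y = ↑(D.Rpos.biUnion fun α =>
      (Finset.Ioc ⌊-⟪y, α⟫⌋ ⌊-⟪x, α⟫⌋).map (Function.Embedding.sectR α ℤ)) := by
    ext ⟨α, k⟩
    simp [mem_sepPos_iff hx]
    tauto
  rw [hsep, Nat.card_coe_set_eq, Set.ncard_coe_finset, Finset.card_biUnion]
  · simp [Int.card_Ioc]
  · intro a _ b _ hab
    simp only [Function.onFun, Finset.disjoint_left, Finset.mem_map, Function.Embedding.sectR_apply]
    rintro _ ⟨k, _, rfl⟩ ⟨k', _, h⟩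
    exact hab (congrArg Prod.fst h).symm

lemma signedLen_eq_wallPotential_sub {x y : V} (hx : D.OffWalls x) (hy : D.OffWalls y) :
    signedLen D.Rpos x y = D.wallPotential x - D.wallPotential y := by
  rw [signedLen, card_sepPos hx, card_sepPos hy, wallPotential, wallPotential]
  push_cast
  rw [← Finset.sum_sub_distrib, ← Finset.sum_sub_distrib]
  refine Finset.sum_congr rfl fun α _ => ?_
  simpa using Int.toNat_sub_toNat_neg (⌊-⟪x, α⟫⌋ - ⌊-⟪y, α⟫⌋)

lemma inner_two_smul_halfSum (t : V) : ⟪t, (2 : ℝ) • halfSum D⟫ = ∑ α ∈ D.Rpos, ⟪t, α⟫ := by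
  rw [halfSum, smul_smul, show (2 : ℝ) * (1 / 2) = 1 by norm_num, one_smul, inner_sum]

lemma wallPotential_add {t : V} (ht : D.IsCoweight t) (x : V) :
    (D.wallPotential (x + t) : ℝ) = D.wallPotential x - ⟪t, (2 : ℝ) • halfSum D⟫ := by
  rw [inner_two_smul_halfSum, wallPotential, wallPotential]
  push_cast
  rw [← Finset.sum_sub_distrib]
  refine Finset.sum_congr rfl fun α hα => ?_
  obtain ⟨z, hz⟩ := ht α hα
  rw [inner_add_left, hz, neg_add, ← sub_eq_add_neg, Int.floor_sub_intCast]
  push_cast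
  rfl

lemma wallPotential_add_sub_add {t : V} (ht : D.IsCoweight t) (x y : V) :
    D.wallPotential (x + t) - D.wallPotential (y + t) = D.wallPotential x - D.wallPotential y := by
  have h : ((D.wallPotential (x + t) - D.wallPotential (y + t) : ℤ) : ℝ)
      = ((D.wallPotential x - D.wallPotential y : ℤ) : ℝ) := by
    push_cast
    rw [wallPotential_add ht, wallPotential_add ht]
    ring
  exact_mod_cast h

lemma finLen_eq_card_filter (p₀ : V) (w : V → V) :
    finLen D p₀ w = (D.Rpos.filter fun α => ⟪w p₀, α⟫ < 0).card := by
  rw [finLen, ← Nat.card_eq_finsetCard]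
  exact Nat.card_congr (Equiv.subtypeEquivRight fun α => by simp)

lemma InFundAlcove.inner_mem (hp₀ : D.InFundAlcove p₀) {γ : V}
    (hγ : D.IsRoot γ) : (0 < ⟪p₀, γ⟫ ∧ ⟪p₀, γ⟫ < 1) ∨ (-1 < ⟪p₀, γ⟫ ∧ ⟪p₀, γ⟫ < 0) := by
  rcases hγ with hγ | hγ
  · exact Or.inl (hp₀ γ hγ)
  · have := hp₀ _ hγ
    rw [inner_neg_right] at this
    exact Or.inr ⟨by linarith, by linarith⟩

lemma InFundAlcove.inner_ne_intCast (hp₀ : D.InFundAlcove p₀) {γ : V}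
    (hγ : D.IsRoot γ) (z : ℤ) : ⟪p₀, γ⟫ ≠ z := by
  rintro h
  rcases hp₀.inner_mem hγ with ⟨h₀, h₁⟩ | ⟨h₀, h₁⟩ <;> rw [h] at h₀ h₁ <;> norm_cast at h₀ h₁ <;>
    omega

lemma InFundAlcove.floor_neg_inner (hp₀ : D.InFundAlcove p₀) {γ : V}
    (hγ : D.IsRoot γ) : ⌊-⟪p₀, γ⟫⌋ = (if ⟪p₀, γ⟫ < 0 then 1 else 0) - 1 := by
  rcases hp₀.inner_mem hγ with ⟨h₀, h₁⟩ | ⟨h₀, h₁⟩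
  · rw [if_neg h₀.not_gt, Int.floor_eq_iff]
    constructor <;> push_cast <;> linarith
  · rw [if_pos h₁, Int.floor_eq_iff]
    constructor <;> push_cast <;> linarith

lemma InFundAlcove.wallPotential_eq (hp₀ : D.InFundAlcove p₀) :
    D.wallPotential p₀ = -D.Rpos.card := by
  rw [wallPotential, Finset.sum_congr rfl fun α hα => hp₀.floor_neg_inner (isRoot_of_mem hα)]
  simp +contextual [(hp₀ _ _).1.not_gt]

lemma InFundAlcove.wallPotential_reflComp (hp₀ : D.InFundAlcove p₀)
    {l : List V} (hl : ∀ a ∈ l, a ∈ D.Rpos) :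
    D.wallPotential (reflComp l p₀) = finLen D p₀ (reflComp l) - D.Rpos.card := by
  have hfloor : ∀ α ∈ D.Rpos, ⌊-⟪reflComp l p₀, α⟫⌋
      = (if ⟪reflComp l p₀, α⟫ < 0 then 1 else 0) - 1 := fun α hα => by
    simpa only [inner_reflComp_left] using hp₀.floor_neg_inner
      (isRoot_reflComp (fun b hb => hl b (List.mem_reverse.1 hb)) (isRoot_of_mem hα))
  rw [wallPotential, Finset.sum_congr rfl hfloor, Finset.sum_sub_distrib, finLen_eq_card_filter,
    Finset.card_filter]
  simp

lemma genRoot_mem (hθ : θ ∈ D.Rpos) (i : Gen n) : genRoot D θ i ∈ D.Rpos := by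
  cases i with
  | none => exact hθ
  | some j => exact D.hsimple j

lemma InFundAlcove.inner_lt_of_isHighest (hp₀ : D.InFundAlcove p₀)
    (hθhigh : D.IsHighest θ) {β : V} (hβ : β ∈ D.Rpos) (hne : β ≠ θ) :
    ⟪p₀, β⟫ < ⟪p₀, θ⟫ := by
  obtain ⟨c, hc, hθβ⟩ := hθhigh β hβ
  have hterm : ∀ i ∈ Finset.univ, 0 ≤ c i * ⟪p₀, D.simple i⟫ :=
    fun i _ => mul_nonneg (hc i) (hp₀ _ (D.hsimple i)).1.le
  have hpair : ⟪p₀, θ⟫ - ⟪p₀, β⟫ = ∑ i, c i * ⟪p₀, D.simple i⟫ := by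
    simp only [← inner_sub_right, hθβ, inner_sum, real_inner_smul_right]
  refine sub_pos.1 (hpair ▸ (Finset.sum_nonneg hterm).lt_of_ne fun hsum => hne ?_)
  have hc0 : ∀ i, c i = 0 := fun i =>
    (mul_eq_zero.1 ((Finset.sum_eq_zero_iff_of_nonneg hterm).1 hsum.symm i (Finset.mem_univ i))
      ).resolve_right (hp₀ _ (D.hsimple i)).1.ne'
  simpa [hc0, sub_eq_zero, eq_comm] using hθβ

lemma InFundAlcove.inner_le_of_isHighest (hp₀ : D.InFundAlcove p₀)
    (hθhigh : D.IsHighest θ) {β : V} (hβ : β ∈ D.Rpos) :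
    ⟪p₀, β⟫ ≤ ⟪p₀, θ⟫ := by
  rcases eq_or_ne β θ with rfl | hne
  · exact le_rfl
  · exact (hp₀.inner_lt_of_isHighest hθhigh hβ hne).le

/-- The key input is `⟪α, θ^∨⟫ ∈ {0, 1}`, read off from `⟪p₀, s_θ α⟫ = ⟪p₀, α⟫ - ⟪α, θ^∨⟫ ⟪p₀, θ⟫`
and the maximality of `⟪p₀, θ⟫` among the `⟪p₀, β⟫`, `β > 0`. -/
lemma InFundAlcove.inner_sgen_none_of_ne (hθ : θ ∈ D.Rpos)
    (hθhigh : D.IsHighest θ)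
    (hp₀ : D.InFundAlcove p₀) {α : V} (hα : α ∈ D.Rpos) (hne : α ≠ θ) :
    0 < ⟪sgen D θ none p₀, α⟫ ∧ ⟪sgen D θ none p₀, α⟫ < 1 := by
  obtain ⟨c, hc⟩ := D.hcrys θ hθ α hα
  have hval : ⟪sgen D θ none p₀, α⟫ = ⟪p₀, α⟫ - (⟪p₀, θ⟫ - 1) * c := by
    simp only [sgen, inner_aref, genRoot, genK]
    rw [real_inner_comm α (coroot' θ), hc]
    push_cast
    ring
  have hsref : ⟪p₀, sref θ α⟫ = ⟪p₀, α⟫ - c * ⟪p₀, θ⟫ := by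
    rw [← hc]
    simp only [sref, coroot', inner_sub_right, real_inner_smul_right]
    ring
  have ha := hp₀ α hα
  have hx := hp₀ θ hθ
  have hlt := hp₀.inner_lt_of_isHighest hθhigh hα hne
  have hc01 : c = 0 ∨ c = 1 := by
    rcases D.hrefl θ hθ α hα with h | h
    · have h₁ := (hp₀ _ h).1
      have h₂ := hp₀.inner_le_of_isHighest hθhigh h
      rw [hsref] at h₁ h₂
      have hc₁ : c < 1 := by exact_mod_cast (by nlinarith : (c : ℝ) < 1)
      have hc₂ : -1 < c := by exact_mod_cast (by nlinarith : (-1 : ℝ) < c)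
      omega
    · have h₁ := (hp₀ _ h).1
      have h₂ := hp₀.inner_le_of_isHighest hθhigh h
      rw [inner_neg_right, hsref] at h₁ h₂
      have hc₁ : 0 < c := by exact_mod_cast (by nlinarith : (0 : ℝ) < c)
      have hc₂ : c < 2 := by exact_mod_cast (by nlinarith : (c : ℝ) < 2)
      omega
  rcases hc01 with rfl | rfl <;> rw [hval] <;> push_cast <;> constructor <;> linarith

lemma InFundAlcove.inner_sgen_of_ne (hθ : θ ∈ D.Rpos)
    (hθhigh : D.IsHighest θ)
    (hp₀ : D.InFundAlcove p₀) (i : Gen n) {α : V} (hα : α ∈ D.Rpos)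
    (hne : α ≠ genRoot D θ i) :
    0 < ⟪sgen D θ i p₀, α⟫ ∧ ⟪sgen D θ i p₀, α⟫ < 1 := by
  cases i with
  | none => exact hp₀.inner_sgen_none_of_ne hθ hθhigh hα hne
  | some j =>
    have : sgen D θ (some j) p₀ = sref (D.simple j) p₀ := by
      simp [sgen, aref_eq_sref_sub, genRoot, genK]
    rw [this, inner_sref_left]
    exact hp₀ _ (sref_simple_mem j hα hne)

lemma InFundAlcove.floor_neg_inner_sgen_of_ne (hθ : θ ∈ D.Rpos)
    (hθhigh : D.IsHighest θ)
    (hp₀ : D.InFundAlcove p₀) (i : Gen n) {γ : V} (hγ : D.IsRoot γ)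
    (h₁ : γ ≠ genRoot D θ i) (h₂ : γ ≠ -genRoot D θ i) :
    ⌊-⟪sgen D θ i p₀, γ⟫⌋ = ⌊-⟪p₀, γ⟫⌋ := by
  rcases hγ with hγ | hγ
  · rw [floor_neg_eq_neg_one (hp₀.inner_sgen_of_ne hθ hθhigh i hγ h₁),
      floor_neg_eq_neg_one (hp₀ γ hγ)]
  · have hs := hp₀.inner_sgen_of_ne hθ hθhigh i hγ fun h => h₂ (by rw [← h, neg_neg])
    have hp := hp₀ _ hγ
    rw [inner_neg_right] at hs hp
    rw [Int.floor_eq_zero_iff.2 ⟨hs.1.le, hs.2⟩, Int.floor_eq_zero_iff.2 ⟨hp.1.le, hp.2⟩]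

lemma InFundAlcove.floor_neg_inner_sub_sgen_genRoot (hθ : θ ∈ D.Rpos)
    (hp₀ : D.InFundAlcove p₀) (i : Gen n) :
    ⌊-⟪p₀, genRoot D θ i⟫⌋ - ⌊-⟪sgen D θ i p₀, genRoot D θ i⟫⌋ = -(1 + 2 * genK i) ∧
      ⌊-⟪p₀, -genRoot D θ i⟫⌋ - ⌊-⟪sgen D θ i p₀, -genRoot D θ i⟫⌋ = 1 + 2 * genK i := by
  have ha := hp₀ _ (genRoot_mem hθ i)
  have hs : ⟪sgen D θ i p₀, genRoot D θ i⟫ = -⟪p₀, genRoot D θ i⟫ - ((2 * genK i : ℤ) : ℝ) := by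
    rw [sgen, inner_aref_self (D.hnz _ (genRoot_mem hθ i))]
    push_cast
    ring
  have e₁ : -⟪sgen D θ i p₀, genRoot D θ i⟫ = ⟪p₀, genRoot D θ i⟫ + ((2 * genK i : ℤ) : ℝ) := by
    rw [hs]; ring
  have e₂ : -⟪sgen D θ i p₀, -genRoot D θ i⟫ = -⟪p₀, genRoot D θ i⟫ - ((2 * genK i : ℤ) : ℝ) := by
    rw [inner_neg_right, hs]; ring
  rw [e₁, e₂, inner_neg_right, neg_neg, Int.floor_add_intCast, Int.floor_sub_intCast,
    floor_neg_eq_neg_one ha, Int.floor_eq_zero_iff.2 ⟨ha.1.le, ha.2⟩]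
  constructor <;> ring

lemma InFundAlcove.sign_inner_genRoot_add_genK (hθ : θ ∈ D.Rpos)
    (hp₀ : D.InFundAlcove p₀) (i : Gen n) :
    (SignType.sign (⟪p₀, genRoot D θ i⟫ + genK i) : ℤ) = 1 + 2 * genK i := by
  have ha := hp₀ _ (genRoot_mem hθ i)
  cases i with
  | none =>
    rw [sign_neg (by simp only [genK]; push_cast; linarith)]
    rfl
  | some j =>
    rw [sign_pos (by simp only [genK]; push_cast; linarith)]
    rfl

lemma InFundAlcove.wallPotential_reflComp_sub_sgen (hθ : θ ∈ D.Rpos)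
    (hθhigh : D.IsHighest θ)
    (hp₀ : D.InFundAlcove p₀) {l : List V} (hl : ∀ a ∈ l, a ∈ D.Rpos)
    (i : Gen n) :
    D.wallPotential (reflComp l p₀) - D.wallPotential (reflComp l (sgen D θ i p₀)) =
      if reflComp l (genRoot D θ i) ∈ D.Rpos then -(1 + 2 * genK i) else 1 + 2 * genK i := by
  set β := genRoot D θ i
  set ω := reflComp l β
  have hl₀ : ∀ a ∈ l, a ≠ 0 := fun a ha => D.hnz a (hl a ha)
  have hrev : ∀ a ∈ l.reverse, a ∈ D.Rpos := fun a ha => hl a (List.mem_reverse.1 ha)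
  have hω : D.IsRoot ω := isRoot_reflComp hl (isRoot_of_mem (genRoot_mem hθ i))
  have of_eq : ∀ α, reflComp l.reverse α = β → α = ω := fun α h => by
    rw [← reflComp_reflComp_reverse hl₀ α, h]
  have of_eq_neg : ∀ α, reflComp l.reverse α = -β → α = -ω := fun α h => by
    rw [← reflComp_reflComp_reverse hl₀ α, h, reflComp_neg]
  have other : ∀ α ∈ D.Rpos, reflComp l.reverse α ≠ β → reflComp l.reverse α ≠ -β →
      ⌊-⟪p₀, reflComp l.reverse α⟫⌋ - ⌊-⟪sgen D θ i p₀, reflComp l.reverse α⟫⌋ = 0 :=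
    fun α hα h₁ h₂ => by
      rw [hp₀.floor_neg_inner_sgen_of_ne hθ hθhigh i
        (isRoot_reflComp hrev (isRoot_of_mem hα)) h₁ h₂, sub_self]
  obtain ⟨hβ, hnegβ⟩ := hp₀.floor_neg_inner_sub_sgen_genRoot hθ i
  simp only [wallPotential, ← Finset.sum_sub_distrib, inner_reflComp_left]
  split_ifs with hωpos
  · rw [Finset.sum_eq_single ω (fun α hα hne => other α hα (fun h => hne (of_eq α h))
      (fun h => D.hdisj ω hωpos (of_eq_neg α h ▸ hα))) (absurd hωpos),
      reflComp_reverse_reflComp hl₀, hβ]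
  · have hωneg : -ω ∈ D.Rpos := hω.resolve_left hωpos
    rw [Finset.sum_eq_single (-ω) (fun α hα hne => other α hα (fun h => hωpos (of_eq α h ▸ hα))
      (fun h => hne (of_eq_neg α h))) (absurd hωneg),
      reflComp_neg, reflComp_reverse_reflComp hl₀, hnegβ]

lemma walkMap_append_singleton (l : List (Gen n × Bool)) (s : Gen n × Bool) :
    walkMap D θ (l ++ [s]) =
      if s.2 = true then walkMap D θ l ∘ sgen D θ s.1 else walkMap D θ l := by
  simp [walkMap, List.foldl_append]

lemma walkMap_eq_reflComp_add (hθ : θ ∈ D.Rpos) (steps : List (Gen n × Bool)) :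
    ∃ (l : List V) (t : V), (∀ a ∈ l, a ∈ D.Rpos) ∧ D.IsCoweight t ∧
      ∀ x, walkMap D θ steps x = reflComp l x + t := by
  induction steps using List.reverseRecOn with
  | nil => exact ⟨[], 0, by simp, isCoweight_zero, fun x => (add_zero x).symm⟩
  | append_singleton steps s ih =>
    obtain ⟨l, t, hl, ht, hw⟩ := ih
    obtain ⟨i, _ | _⟩ := s
    · exact ⟨l, t, hl, ht, by simpa [walkMap_append_singleton] using hw⟩
    · have hβ := genRoot_mem hθ i
      refine ⟨l ++ [genRoot D θ i], t - ((genK i : ℤ) : ℝ) • reflComp l (coroot' (genRoot D θ i)),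
        ?_, ht.sub ((isCoweight_reflComp_coroot hl hβ).intCast_smul _), fun x => ?_⟩
      · simpa [or_imp, forall_and, hβ] using hl
      · rw [walkMap_append_singleton, if_pos rfl, Function.comp_apply, hw, sgen,
          aref_eq_sref_sub, reflComp_sub, reflComp_smul, reflComp_append]
        change _ = reflComp l (sref _ x) + _
        abel

lemma crossAt_append_of_lt {l : List (Gen n × Bool)} {j : ℕ} (hj : j < l.length)
    (l' : List (Gen n × Bool)) : crossAt (l ++ l') j ↔ crossAt l j := by
  rw [crossAt, crossAt, List.getD_append _ _ _ _ hj]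

lemma sideAt_append_of_lt {l : List (Gen n × Bool)} {j : ℕ} (hj : j < l.length)
    (l' : List (Gen n × Bool)) : sideAt D θ p₀ (l ++ l') j = sideAt D θ p₀ l j := by
  unfold sideAt wallRoot wallConst wallDir stepGen
  rw [List.take_append_of_le_length hj.le, List.getD_append _ _ _ _ hj]

lemma crossAt_append_singleton_length (l : List (Gen n × Bool)) (s : Gen n × Bool) :
    crossAt (l ++ [s]) l.length ↔ s.2 = true := by
  simp [crossAt]

lemma sideAt_append_singleton_length {l : List (Gen n × Bool)} {lw : List V}
    (hlw : ∀ a ∈ lw, a ∈ D.Rpos) {t : V} (hw : ∀ x, walkMap D θ l x = reflComp lw x + t)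
    (s : Gen n × Bool) :
    sideAt D θ p₀ (l ++ [s]) l.length =
      if reflComp lw (genRoot D θ s.1) ∈ D.Rpos then ⟪p₀, genRoot D θ s.1⟫ + genK s.1
      else -(⟪p₀, genRoot D θ s.1⟫ + genK s.1) := by
  have hl₀ : ∀ a ∈ lw, a ≠ 0 := fun a ha => D.hnz a (hlw a ha)
  have hstep : stepGen (l ++ [s]) l.length = s.1 := by simp [stepGen]
  have hdir : wallDir D θ (l ++ [s]) l.length = reflComp lw (genRoot D θ s.1) := by
    rw [wallDir, List.take_left, hstep, hw, hw, reflComp_zero]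
    abel
  simp only [sideAt, wallRoot, wallConst, hdir, List.take_left, hstep, hw, reflComp_zero, zero_add]
  split_ifs
  · rw [inner_add_left, inner_reflComp_reflComp hl₀]
    ring
  · rw [inner_neg_right, inner_add_left, inner_reflComp_reflComp hl₀]
    ring

lemma wallPotential_walkMap_sub_append_cross (hθ : θ ∈ D.Rpos)
    (hθhigh : D.IsHighest θ)
    (hp₀ : D.InFundAlcove p₀) (l : List (Gen n × Bool)) (i : Gen n) :
    D.wallPotential (walkMap D θ l p₀) - D.wallPotential (walkMap D θ (l ++ [(i, true)]) p₀) =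
      -(SignType.sign (sideAt D θ p₀ (l ++ [(i, true)]) l.length) : ℤ) := by
  obtain ⟨lw, t, hlw, ht, hw⟩ := walkMap_eq_reflComp_add hθ l
  rw [sideAt_append_singleton_length hlw hw, walkMap_append_singleton, if_pos rfl,
    Function.comp_apply, hw, hw, wallPotential_add_sub_add ht,
    hp₀.wallPotential_reflComp_sub_sgen hθ hθhigh hlw]
  split_ifs
  · rw [hp₀.sign_inner_genRoot_add_genK hθ]
  · rw [Left.sign_neg, SignType.coe_neg, hp₀.sign_inner_genRoot_add_genK hθ, neg_neg]

lemma numPosCross_sub_numNegCross (steps : List (Gen n × Bool)) :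
    (numPosCross D θ p₀ steps : ℤ) - numNegCross D θ p₀ steps =
      ∑ j ∈ Finset.range steps.length,
        if crossAt steps j then -(SignType.sign (sideAt D θ p₀ steps j) : ℤ) else 0 := by
  rw [numPosCross, numNegCross, Finset.card_filter, Finset.card_filter]
  push_cast
  rw [← Finset.sum_sub_distrib]
  refine Finset.sum_congr rfl fun j _ => ?_
  by_cases h : crossAt steps j
  · rcases lt_trichotomy (sideAt D θ p₀ steps j) 0 with h' | h' | h'
    · simp [h, h', h'.not_gt]
    · simp [h, h']
    · simp [h, h', h'.not_gt]
  · simp [h]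

lemma numPosCross_sub_numNegCross_eq_wallPotential_sub (hθ : θ ∈ D.Rpos)
    (hθhigh : D.IsHighest θ)
    (hp₀ : D.InFundAlcove p₀) (steps : List (Gen n × Bool)) :
    (numPosCross D θ p₀ steps : ℤ) - numNegCross D θ p₀ steps =
      D.wallPotential p₀ - D.wallPotential (walkMap D θ steps p₀) := by
  rw [numPosCross_sub_numNegCross]
  induction steps using List.reverseRecOn with
  | nil => simp [walkMap]
  | append_singleton l s ih =>
    have hprefix : ∀ j ∈ Finset.range l.length,
        (if crossAt (l ++ [s]) j then -(SignType.sign (sideAt D θ p₀ (l ++ [s]) j) : ℤ) else 0)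
          = if crossAt l j then -(SignType.sign (sideAt D θ p₀ l j) : ℤ) else 0 := fun j hj => by
      rw [crossAt_append_of_lt (Finset.mem_range.1 hj), sideAt_append_of_lt (Finset.mem_range.1 hj)]
    rw [List.length_append, List.length_singleton, Finset.sum_range_succ,
      Finset.sum_congr rfl hprefix, ih]
    obtain ⟨i, _ | _⟩ := s
    · simp [crossAt_append_singleton_length, walkMap_append_singleton]
    · rw [if_pos ((crossAt_append_singleton_length l _).2 rfl),
        ← wallPotential_walkMap_sub_append_cross hθ hθhigh hp₀ l i]
      ring

end RSData

theorem signed_length_of_walk_general {n : ℕ} (D : RSData V n) (θ : V)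
    (hθ : θ ∈ D.Rpos)
    (hθhigh : ∀ β ∈ D.Rpos, ∃ c : Fin n → ℝ, (∀ i, 0 ≤ c i) ∧
      θ - β = ∑ i, c i • D.simple i)
    (p₀ : V) (hp₀ : ∀ α ∈ D.Rpos, 0 < ⟪p₀, α⟫ ∧ ⟪p₀, α⟫ < 1)
    (steps : List (Gen n × Bool)) :
    ((numPosCross D θ p₀ steps : ℤ) - (numNegCross D θ p₀ steps : ℤ)
        = signedLen D.Rpos p₀ (walkMap D θ steps p₀)) ∧
    (∀ (μ : V) (v : V → V), v ∈ W0Set D.Rpos →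
      (∀ α ∈ D.Rpos, ∃ z : ℤ, ⟪μ, α⟫ = (z : ℝ)) →
      (∀ x, walkMap D θ steps x = v x + μ) →
      ((numPosCross D θ p₀ steps : ℝ) - (numNegCross D θ p₀ steps : ℝ)
        = ⟪μ, (2 : ℝ) • halfSum D⟫ - (finLen D p₀ v : ℝ))) := by
  have hε := RSData.numPosCross_sub_numNegCross_eq_wallPotential_sub hθ hθhigh hp₀ steps
  refine ⟨?_, fun μ v ⟨lv, hlv, hv⟩ hμ hend => ?_⟩
  · obtain ⟨l, t, hl, ht, hw⟩ := RSData.walkMap_eq_reflComp_add hθ steps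
    have hfund : ∀ γ, D.IsRoot γ → ∀ z : ℤ, ⟪p₀, γ⟫ ≠ z :=
      fun γ hγ => RSData.InFundAlcove.inner_ne_intCast hp₀ hγ
    rw [hε, RSData.signedLen_eq_wallPotential_sub (fun α hα => hfund α (RSData.isRoot_of_mem hα))
      (hw p₀ ▸ RSData.offWalls_reflComp_add hfund hl ht)]
  · subst hv
    have hend' : walkMap D θ steps p₀ = reflComp lv p₀ + μ := hend p₀
    have hFend := RSData.wallPotential_add hμ (reflComp lv p₀)
    rw [RSData.InFundAlcove.wallPotential_reflComp hp₀ hlv] at hFend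
    have hεℝ : (numPosCross D θ p₀ steps : ℝ) - numNegCross D θ p₀ steps
        = D.wallPotential p₀ - D.wallPotential (walkMap D θ steps p₀) := by exact_mod_cast hε
    change _ = _ - (finLen D p₀ (reflComp lv) : ℝ)
    rw [hεℝ, hend', hFend, RSData.InFundAlcove.wallPotential_eq hp₀]
    push_cast
    ring

/-- For a positively folded alcove walk `p`, the signed length of `p`
equals the signed length of its end alcove: `ε(p) = ε⁺(p) − ε⁻(p) = ε(end(p))`.
In particular, if `p` ends in `t_μ φ(p)` with `φ(p) ∈ W₀`, then
`ε(p) = ⟨μ, 2ρ⟩ − ℓ(φ(p))`. -/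
theorem signed_length_of_walk {n : ℕ} (D : RSData V n) (θ : V)
    (hθ : θ ∈ D.Rpos)
    (hθhigh : ∀ β ∈ D.Rpos, ∃ c : Fin n → ℝ, (∀ i, 0 ≤ c i) ∧
      θ - β = ∑ i, c i • D.simple i)
    (p₀ : V) (hp₀ : ∀ α ∈ D.Rpos, 0 < ⟪p₀, α⟫ ∧ ⟪p₀, α⟫ < 1)
    (steps : List (Gen n × Bool)) (hpf : PosFolded D θ p₀ steps) :
    ((numPosCross D θ p₀ steps : ℤ) - (numNegCross D θ p₀ steps : ℤ)
        = signedLen D.Rpos p₀ (walkMap D θ steps p₀)) ∧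
    (∀ (μ : V) (v : V → V), v ∈ W0Set D.Rpos →
      (∀ α ∈ D.Rpos, ∃ z : ℤ, ⟪μ, α⟫ = (z : ℝ)) →
      (∀ x, walkMap D θ steps x = v x + μ) →
      ((numPosCross D θ p₀ steps : ℝ) - (numNegCross D θ p₀ steps : ℝ)
        = ⟪μ, (2 : ℝ) • halfSum D⟫ - (finLen D p₀ v : ℝ))) :=
  signed_length_of_walk_general D θ hθ hθhigh p₀ hp₀ steps
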